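/- (Recursion for the Z-sum, the analogue of (IW) used in the appendix.) For any map g : α → α → R and any k ≥ 2, Z̃_g((a_1,b_1), p_2, …, p_k) − Z̃_g((b_1,a_1), p_2, …, p_k) = Σ_{l=2}^k [ Z̃_g((a_l,b_1), P_l) · g(b_l, a_1) + Z̃_g((b_1,a_l), P_l) · g(a_1, b_l) − Z̃_g((b_l,b_1), P_l) · g(a_l, a_1) − Z̃_g((b_1,b_l), P_l) · g(a_1, a_l) ], where p_i = (a_i,b_i) and P_l denotes the (k−2)-tuple (a_2,b_2), …, (a_{l−1},b_{l−1}), (a_{l+1},b_{l+1}), …, (a_k,b_k), so that each Z̃_g on the right-hand side is taken over k−1 pairs. -/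

import Mathlib

/-- The sign of a Boolean: `true ↦ 1`, `false ↦ -1` (encoding `ε ∈ {1, -1}`). -/
def signR (R : Type*) [CommRing R] (e : Bool) : R := if e then 1 else -1

/-- `B_i(ε)`: the second component `b_i` if `ε = 1`, the first component `a_i` if `ε = -1`. -/
def Bc {α : Type*} (q : α × α) (e : Bool) : α := if e then q.2 else q.1

/-- `A_i(ε)`: the first component `a_i` if `ε = 1`, the second component `b_i` if `ε = -1`. -/
def Ac {α : Type*} (q : α × α) (e : Bool) : α := if e then q.1 else q.2

/-- `Z̃_h((a_1,b_1), …, (a_k,b_k)) = Σ_{ε ∈ {1,−1}^k, ε_1 = 1} Σ_{σ ∈ S'_k} ∏_{i=1}^k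
ε_{σ(i)} · h(B_{σ(i)}(ε_{σ(i)}), A_{σ(i+1)}(ε_{σ(i+1)}))`, where `S'_k` is the set
of permutations fixing the first index, and indices are cyclic (`σ(k+1) := σ(1)`). -/
def Ztilde {R α : Type*} [CommRing R] (h : α → α → R) {k : ℕ} (p : Fin k → α × α) : R :=
  ∑ ε ∈ Finset.univ.filter (fun ε : Fin k → Bool => ∀ i : Fin k, (i : ℕ) = 0 → ε i = true),
    ∑ σ ∈ Finset.univ.filter (fun σ : Equiv.Perm (Fin k) => ∀ i : Fin k, (i : ℕ) = 0 → σ i = i),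
      ∏ i : Fin k,
        signR R (ε (σ i)) * h (Bc (p (σ i)) (ε (σ i)))
          (Ac (p (σ (finRotate k i))) (ε (σ (finRotate k i))))


/-! Fixing the first pair of a cycle turns `Z̃` into a signed sum over all paths from `b₁` to `a₁`
that traverse the remaining pairs in every order and orientation (`pathSum`). Splitting off the
first edge of a path gives a recursion in its first pair; reading paths backwards (`g` becomes
`flip g`, every orientation is reversed, costing `(-1) ^ m`) gives the same recursion in its last
pair. The identity is the last-pair expansion of the path sum `b₁ → a₁` minus the first-pair
expansion of the path sum `a₁ → b₁`. -/

open Finset Equiv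

section Permutations

variable {M : Type*} [AddCommMonoid M]

def succAbovePerm {m : ℕ} (j : Fin (m + 1)) (τ : Perm (Fin m)) : Perm (Fin (m + 1)) :=
  j.cycleRange.symm * Perm.decomposeFin.symm (0, τ)

@[simp] lemma succAbovePerm_zero {m : ℕ} (j : Fin (m + 1)) (τ : Perm (Fin m)) :
    succAbovePerm j τ 0 = j := by
  simp [succAbovePerm]

@[simp] lemma succAbovePerm_succ {m : ℕ} (j : Fin (m + 1)) (τ : Perm (Fin m)) (i : Fin m) :
    succAbovePerm j τ i.succ = j.succAbove (τ i) := by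
  simp [succAbovePerm, Perm.decomposeFin_symm_apply_succ]

lemma succAbovePerm_injective {m : ℕ} :
    Function.Injective fun z : Fin (m + 1) × Perm (Fin m) => succAbovePerm z.1 z.2 := by
  rintro ⟨j, τ⟩ ⟨j', τ'⟩ h
  obtain rfl : j = j' := by simpa using congr($h 0)
  exact Prod.ext rfl (Perm.ext fun i => by simpa using congr($h i.succ))

lemma sum_perm_fin_succ {m : ℕ} (F : Perm (Fin (m + 1)) → M) :
    ∑ σ, F σ = ∑ j, ∑ τ, F (succAbovePerm j τ) := by
  rw [← Fintype.sum_prod_type']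
  refine (Fintype.sum_bijective _ ((Fintype.bijective_iff_injective_and_card _).2
    ⟨succAbovePerm_injective, ?_⟩) _ _ fun _ => rfl).symm
  simp [Fintype.card_perm, Nat.factorial_succ]

end Permutations

lemma List.ofFn_rev {β : Type*} {n : ℕ} (f : Fin n → β) :
    List.ofFn (fun i => f i.rev) = (List.ofFn f).reverse := by
  apply List.ext_getElem <;>
    simp only [List.length_ofFn, List.length_reverse, List.getElem_ofFn, List.getElem_reverse,
      Fin.rev]
  intro i _ _
  congr 2
  omega

section Paths

variable {R α : Type*} [CommRing R]

@[simp] lemma signR_true : signR R true = 1 := rfl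

@[simp] lemma signR_false : signR R false = -1 := rfl

@[simp] lemma signR_not (e : Bool) : signR R (!e) = -signR R e := by
  cases e <;> simp

def orient (q : α × α) (e : Bool) : α × α := (Ac q e, Bc q e)

@[simp] lemma orient_true (q : α × α) : orient q true = q := rfl

@[simp] lemma orient_false (q : α × α) : orient q false = q.swap := rfl

@[simp] lemma orient_not (q : α × α) (e : Bool) : orient q (!e) = (orient q e).swap := by
  cases e <;> rfl

/-- `pathProd g x y [(i₁, o₁), …, (iᵣ, oᵣ)] = g x i₁ * g o₁ i₂ * ⋯ * g oᵣ y`. -/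
def pathProd (g : α → α → R) : α → α → List (α × α) → R
  | x, y, [] => g x y
  | x, y, q :: l => g x q.1 * pathProd g q.2 y l

lemma pathProd_append_singleton (g : α → α → R) (x y : α) (l : List (α × α)) (q : α × α) :
    pathProd g x y (l ++ [q]) = pathProd g x q.1 l * g q.2 y := by
  induction l generalizing x with
  | nil => rfl
  | cons r l ih => simp [pathProd, ih, mul_assoc]

lemma pathProd_reverse_map_swap (g : α → α → R) (x y : α) (l : List (α × α)) :
    pathProd g x y (l.map Prod.swap).reverse = pathProd (flip g) y x l := by
  induction l generalizing y with
  | nil => rfl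
  | cons q l ih => simp [pathProd, pathProd_append_singleton, ih, flip, mul_comm]

lemma prod_path_eq_pathProd (g : α → α → R) {m : ℕ} (w : Fin (m + 1) → α × α) (y : α) :
    (∏ i : Fin m, g (w i.castSucc).2 (w i.succ).1) * g (w (Fin.last m)).2 y =
      pathProd g (w 0).2 y (List.ofFn (Fin.tail w)) := by
  induction m with
  | zero => simp [pathProd]
  | succ m ih =>
    rw [Fin.prod_univ_succ, mul_assoc, List.ofFn_succ, pathProd]
    have htail := ih (Fin.tail w)
    simp only [Fin.tail, Fin.succ_castSucc] at htail
    exact congrArg (_ * ·) htail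

lemma prod_cycle_eq_pathProd (g : α → α → R) {m : ℕ} (w : Fin (m + 1) → α × α) :
    ∏ t, g (w t).2 (w (finRotate (m + 1) t)).1 =
      pathProd g (w 0).2 (w 0).1 (List.ofFn (Fin.tail w)) := by
  rw [Fin.prod_univ_castSucc, finRotate_last, ← prod_path_eq_pathProd]
  simp [Fin.coeSucc_eq_succ]

def pathSum (g : α → α → R) (x y : α) {m : ℕ} (v : Fin m → α × α) : R :=
  ∑ ε : Fin m → Bool, ∑ τ : Perm (Fin m),
    (∏ i, signR R (ε i)) * pathProd g x y (List.ofFn fun i => orient (v (τ i)) (ε (τ i)))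

lemma pathSum_succ (g : α → α → R) (x y : α) {m : ℕ} (v : Fin (m + 1) → α × α) :
    pathSum g x y v = ∑ j, ∑ e, signR R e * g x (orient (v j) e).1 *
      pathSum g (orient (v j) e).2 y (v ∘ j.succAbove) := by
  unfold pathSum
  simp_rw [sum_perm_fin_succ]
  rw [Finset.sum_comm]
  refine Finset.sum_congr rfl fun j _ => ?_
  rw [← Fintype.sum_equiv (Fin.insertNthEquiv (fun _ => Bool) j) _ _ (fun _ => rfl),
    Fintype.sum_prod_type]
  refine Finset.sum_congr rfl fun e _ => ?_
  simp only [Finset.mul_sum]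
  refine Finset.sum_congr rfl fun ε _ => Finset.sum_congr rfl fun τ _ => ?_
  simp only [Fin.insertNthEquiv_apply, Fin.prod_univ_succAbove _ j, Fin.insertNth_apply_same,
    Fin.insertNth_apply_succAbove, List.ofFn_succ, succAbovePerm_zero, succAbovePerm_succ, pathProd,
    Function.comp_apply]
  ring

/-- Reversing a path: the bijection `(ε, τ) ↦ (!ε, τ * Fin.revPerm)` on the summands. -/
lemma pathSum_eq_flip (g : α → α → R) (x y : α) {m : ℕ} (v : Fin m → α × α) :
    pathSum g x y v = (-1) ^ m * pathSum (flip g) y x v := by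
  unfold pathSum
  rw [Finset.mul_sum]
  refine (Fintype.sum_bijective (fun ε => (! ·) ∘ ε) (Function.Involutive.bijective fun ε => ?_)
    _ _ fun ε => ?_).symm
  · funext i
    simp
  rw [Finset.mul_sum]
  refine Fintype.sum_equiv (Equiv.mulRight Fin.revPerm) _ _ fun τ => ?_
  have hsign : ∏ i, signR R (!ε i) = (-1) ^ m * ∏ i, signR R (ε i) := by
    simp only [signR_not, Finset.prod_neg, Finset.card_univ, Fintype.card_fin]
  have hlist : (List.ofFn fun i => orient (v (τ i.rev)) (!ε (τ i.rev))) =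
      ((List.ofFn fun i => orient (v (τ i)) (ε (τ i))).map Prod.swap).reverse := by
    rw [List.map_ofFn, ← List.ofFn_rev]
    simp only [Function.comp_apply, orient_not]
  simp only [Function.comp_apply, coe_mulRight, Perm.mul_apply, Fin.revPerm_apply, hsign, hlist,
    pathProd_reverse_map_swap, mul_assoc]

lemma pathSum_succ' (g : α → α → R) (x y : α) {m : ℕ} (v : Fin (m + 1) → α × α) :
    pathSum g x y v = ∑ j, ∑ e, signR R e * pathSum g x (orient (v j) e).1 (v ∘ j.succAbove) *
      g (orient (v j) e).2 y := by
  rw [pathSum_eq_flip, pathSum_succ, Finset.mul_sum]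
  refine Finset.sum_congr rfl fun j _ => ?_
  simp only [pathSum_eq_flip g x, Fintype.sum_bool, orient_true, orient_false, signR_true,
    signR_false, Prod.fst_swap, Prod.snd_swap, flip]
  ring

end Paths

lemma Ztilde_eq_pathSum {R α : Type*} [CommRing R] (g : α → α → R) {m : ℕ}
    (p : Fin (m + 1) → α × α) :
    Ztilde g p = pathSum g (p 0).2 (p 0).1 (Fin.tail p) := by
  simp only [Ztilde, Fin.val_eq_zero_iff, forall_eq, Finset.sum_filter, sum_perm_fin_succ]
  rw [← Fintype.sum_equiv (Fin.consEquiv fun _ => Bool) _ _ (fun _ => rfl)]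
  simp only [Fin.consEquiv_apply, Fin.cons_zero, succAbovePerm_zero, sum_ite_irrel,
    sum_const_zero, sum_ite_eq', mem_univ, ↓reduceIte, Fintype.sum_prod_type]
  refine Finset.sum_congr rfl fun ε _ => Finset.sum_congr rfl fun τ _ => ?_
  set ε₀ : Fin (m + 1) → Bool := Fin.cons true ε
  set σ := succAbovePerm 0 τ
  rw [Finset.prod_mul_distrib]
  congr 1
  · rw [Equiv.prod_comp σ (fun t => signR R (ε₀ t)), Fin.prod_univ_succ]
    simp [ε₀]
  · refine (prod_cycle_eq_pathProd g fun t => orient (p (σ t)) (ε₀ (σ t))).trans ?_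
    simp only [succAbovePerm_zero, Fin.cons_zero, orient_true, σ, ε₀]
    congr 2

/-- Recursion for the `Z̃`-sum (the analogue of (IW) used in the appendix): for `k ≥ 2`
(here `k = n + 2`),
`Z̃_g((a_1,b_1),p_2,…,p_k) − Z̃_g((b_1,a_1),p_2,…,p_k)
  = Σ_{l=2}^k [ Z̃_g((a_l,b_1),P_l)·g(b_l,a_1) + Z̃_g((b_1,a_l),P_l)·g(a_1,b_l)
    − Z̃_g((b_l,b_1),P_l)·g(a_l,a_1) − Z̃_g((b_1,b_l),P_l)·g(a_1,a_l) ]`,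
where `P_l` is the tuple `(a_2,b_2),…,(a_k,b_k)` with the `l`-th pair removed
(realized via `Fin.succAbove l` and updating the first entry). -/
theorem Ztilde_recursion {R α : Type*} [CommRing R] {n : ℕ}
    (p : Fin (n + 2) → α × α) (g : α → α → R) :
    Ztilde g p - Ztilde g (Function.update p 0 ((p 0).2, (p 0).1)) =
      ∑ l ∈ Finset.univ.filter (fun l : Fin (n + 2) => l ≠ 0),
        (Ztilde g (Function.update (p ∘ l.succAbove) 0 ((p l).1, (p 0).2)) * g (p l).2 (p 0).1
          + Ztilde g (Function.update (p ∘ l.succAbove) 0 ((p 0).2, (p l).1)) * g (p 0).1 (p l).2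
          - Ztilde g (Function.update (p ∘ l.succAbove) 0 ((p l).2, (p 0).2)) * g (p l).1 (p 0).1
          - Ztilde g (Function.update (p ∘ l.succAbove) 0 ((p 0).2, (p l).2)) * g (p 0).1 (p l).1)
    := by
  have hremoved : ∀ (j : Fin (n + 1)) (q : α × α),
      Ztilde g (Function.update (p ∘ j.succ.succAbove) 0 q) =
        pathSum g q.2 q.1 (Fin.tail p ∘ j.succAbove) := by
    intro j q
    rw [Ztilde_eq_pathSum, Function.update_self, Fin.tail_update_zero]
    congr 1
    funext i
    simp [Fin.tail, Fin.succ_succAbove_succ]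
  rw [Finset.sum_filter, Fin.sum_univ_succ (n := n + 1), if_neg (not_not_intro rfl), zero_add,
    Ztilde_eq_pathSum, Ztilde_eq_pathSum, Function.update_self, Fin.tail_update_zero,
    pathSum_succ', pathSum_succ _ (p 0).1, ← Finset.sum_sub_distrib]
  refine Finset.sum_congr rfl fun j _ => ?_
  simp only [if_pos (Fin.succ_ne_zero j), hremoved, Fintype.sum_bool, orient_true, orient_false,
    signR_true, signR_false, Prod.fst_swap, Prod.snd_swap, Fin.tail]
  ring
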